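/- Let d ≥ 1 and let I : C²_b(ℝ^d) → C_b(ℝ^d) be Lipschitz with constant K₀ and satisfy the global comparison property. Let x ∈ ℝ^d and let φ ∈ C²_b(ℝ^d) satisfy 0 ≤ φ ≤ 1 and φ(x) = 0. Then for all u, v ∈ C²_b(ℝ^d): | I(u)(x) − I(v)(x) | ≤ K₀ · ( ‖(1−φ)·(u−v)‖_{C²} + ‖φ‖_{C²} · sup_{y ∈ spt(φ)} |u(y) − v(y)| ), where spt(φ) denotes the support of φ. -/

import Mathlib

/-!
Write `w = u - v` and `M = sup_{spt φ} |w|`. Since `u = v + (1 - φ) w + φ w` and `|φ w| ≤ M φ`,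
the functions `v + (1 - φ) w ± M φ` lie above and below `u` and touch it at `x`, where `φ`
vanishes. The global comparison property squeezes `I u x` between the values of `I` at these
barriers, and the Lipschitz bound compares those with `I v x` at the cost
`K₀ ‖(1 - φ) w ± M φ‖_{C²} ≤ K₀ (‖(1 - φ) w‖_{C²} + M ‖φ‖_{C²})`.
-/

open Metric Set

noncomputable section

abbrev Euc (d : ℕ) := EuclideanSpace ℝ (Fin d)

variable {d : ℕ}

def supNorm (u : Euc d → ℝ) : ℝ := ⨆ x, |u x|

def gradSup (u : Euc d → ℝ) : ℝ := ⨆ x, ‖fderiv ℝ u x‖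

def hessSup (u : Euc d → ℝ) : ℝ := ⨆ x, ‖iteratedFDeriv ℝ 2 u x‖

def C2Norm (u : Euc d → ℝ) : ℝ := supNorm u + gradSup u + hessSup u

def IsC2b (u : Euc d → ℝ) : Prop :=
  ContDiff ℝ 2 u ∧ ∃ M : ℝ, ∀ x, |u x| ≤ M ∧ ‖fderiv ℝ u x‖ ≤ M ∧ ‖iteratedFDeriv ℝ 2 u x‖ ≤ M

def IsCb (f : Euc d → ℝ) : Prop := Continuous f ∧ ∃ M : ℝ, ∀ x, |f x| ≤ M

def GCP (dom : (Euc d → ℝ) → Prop) (I : (Euc d → ℝ) → Euc d → ℝ) : Prop :=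
  ∀ u v, dom u → dom v → (∀ y, u y ≤ v y) → ∀ x, u x = v x → I u x ≤ I v x

def LipWith (K₀ : ℝ) (dom : (Euc d → ℝ) → Prop) (N : (Euc d → ℝ) → ℝ)
    (I : (Euc d → ℝ) → Euc d → ℝ) : Prop :=
  ∀ u v, dom u → dom v → ∀ x, |I u x - I v x| ≤ K₀ * N (fun y => u y - v y)

def iteratedFDerivSup (n : ℕ) (f : Euc d → ℝ) : ℝ := ⨆ x, ‖iteratedFDeriv ℝ n f x‖

lemma isC2b_iff {f : Euc d → ℝ} :
    IsC2b f ↔ ContDiff ℝ 2 f ∧ ∃ M, ∀ n ≤ 2, ∀ x, ‖iteratedFDeriv ℝ n f x‖ ≤ M := by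
  refine and_congr_right fun _ => exists_congr fun M => ⟨fun h n hn x => ?_, fun h x => ?_⟩
  · interval_cases n <;> simp [h x]
  · simpa using And.intro (h 0 (by norm_num) x) (And.intro (h 1 (by norm_num) x) (h 2 le_rfl x))

lemma isC2b_const (c : ℝ) : IsC2b fun _ : Euc d => c := by
  refine isC2b_iff.2 ⟨contDiff_const, |c|, fun n _ x => ?_⟩
  rcases n with _ | n
  · simp
  · simp [iteratedFDeriv_const_of_ne (Nat.succ_ne_zero n)]

namespace IsC2b

variable {f g : Euc d → ℝ}

lemma contDiffAt (hf : IsC2b f) {n : ℕ} (hn : n ≤ 2) (x : Euc d) : ContDiffAt ℝ n f x :=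
  (hf.1.of_le (by exact_mod_cast hn)).contDiffAt

lemma bddAbove_norm_iteratedFDeriv (hf : IsC2b f) {n : ℕ} (hn : n ≤ 2) :
    BddAbove (range fun x => ‖iteratedFDeriv ℝ n f x‖) := by
  obtain ⟨-, M, hM⟩ := isC2b_iff.1 hf
  exact ⟨M, by rintro _ ⟨x, rfl⟩; exact hM n hn x⟩

lemma bddAbove_abs (hf : IsC2b f) : BddAbove (range fun x => |f x|) := by
  simpa using hf.bddAbove_norm_iteratedFDeriv (n := 0) (by norm_num)

lemma add (hf : IsC2b f) (hg : IsC2b g) : IsC2b fun y => f y + g y := by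
  obtain ⟨-, Mf, hMf⟩ := isC2b_iff.1 hf
  obtain ⟨-, Mg, hMg⟩ := isC2b_iff.1 hg
  refine isC2b_iff.2 ⟨hf.1.add hg.1, Mf + Mg, fun n hn x => ?_⟩
  rw [fun_iteratedFDeriv_add_apply (hf.contDiffAt hn x) (hg.contDiffAt hn x)]
  exact (norm_add_le _ _).trans (add_le_add (hMf n hn x) (hMg n hn x))

lemma sub (hf : IsC2b f) (hg : IsC2b g) : IsC2b fun y => f y - g y := by
  obtain ⟨-, Mf, hMf⟩ := isC2b_iff.1 hf
  obtain ⟨-, Mg, hMg⟩ := isC2b_iff.1 hg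
  refine isC2b_iff.2 ⟨hf.1.sub hg.1, Mf + Mg, fun n hn x => ?_⟩
  rw [fun_iteratedFDeriv_sub_apply (hf.contDiffAt hn x) (hg.contDiffAt hn x)]
  exact (norm_sub_le _ _).trans (add_le_add (hMf n hn x) (hMg n hn x))

lemma mul (hf : IsC2b f) (hg : IsC2b g) : IsC2b fun y => f y * g y := by
  obtain ⟨-, Mf, hMf⟩ := isC2b_iff.1 hf
  obtain ⟨-, Mg, hMg⟩ := isC2b_iff.1 hg
  have hMf₀ : 0 ≤ Mf := (norm_nonneg _).trans (hMf 0 (by norm_num) 0)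
  refine isC2b_iff.2 ⟨hf.1.mul hg.1, 4 * (Mf * Mg), fun n hn x => ?_⟩
  calc ‖iteratedFDeriv ℝ n (fun y => f y * g y) x‖
      ≤ ∑ i ∈ Finset.range (n + 1), (n.choose i : ℝ) *
          ‖iteratedFDeriv ℝ i f x‖ * ‖iteratedFDeriv ℝ (n - i) g x‖ :=
        norm_iteratedFDeriv_mul_le hf.1 hg.1 x (by exact_mod_cast hn)
    _ ≤ ∑ i ∈ Finset.range (n + 1), (n.choose i : ℝ) * (Mf * Mg) := by
        refine Finset.sum_le_sum fun i hi => ?_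
        rw [Finset.mem_range] at hi
        rw [mul_assoc]
        gcongr
        exacts [hMf i (by omega) x, hMg (n - i) (by omega) x]
    _ = 2 ^ n * (Mf * Mg) := by
        rw [← Finset.sum_mul, ← Nat.cast_sum, Nat.sum_range_choose, Nat.cast_pow, Nat.cast_ofNat]
    _ ≤ 4 * (Mf * Mg) := by
        gcongr
        · exact mul_nonneg hMf₀ ((norm_nonneg _).trans (hMg 0 (by norm_num) 0))
        · calc (2 : ℝ) ^ n ≤ 2 ^ 2 := pow_le_pow_right₀ (by norm_num) hn
            _ = 4 := by norm_num

end IsC2b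

lemma iteratedFDerivSup_nonneg (n : ℕ) (f : Euc d → ℝ) : 0 ≤ iteratedFDerivSup n f :=
  Real.iSup_nonneg fun _ => norm_nonneg _

lemma C2Norm_eq_sum (f : Euc d → ℝ) :
    C2Norm f = ∑ n ∈ Finset.range 3, iteratedFDerivSup n f := by
  simp [C2Norm, supNorm, gradSup, hessSup, iteratedFDerivSup, Finset.sum_range_succ]

lemma iteratedFDerivSup_add_le {f g : Euc d → ℝ} (hf : IsC2b f) (hg : IsC2b g) {n : ℕ}
    (hn : n ≤ 2) :
    iteratedFDerivSup n (fun y => f y + g y) ≤ iteratedFDerivSup n f + iteratedFDerivSup n g :=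
  ciSup_le fun x => by
    rw [fun_iteratedFDeriv_add_apply (hf.contDiffAt hn x) (hg.contDiffAt hn x)]
    exact (norm_add_le _ _).trans <| add_le_add
      (le_ciSup (hf.bddAbove_norm_iteratedFDeriv hn) x)
      (le_ciSup (hg.bddAbove_norm_iteratedFDeriv hn) x)

lemma iteratedFDerivSup_const_mul {f : Euc d → ℝ} (hf : IsC2b f) {n : ℕ} (hn : n ≤ 2) (c : ℝ) :
    iteratedFDerivSup n (fun y => c * f y) = |c| * iteratedFDerivSup n f := by
  rw [iteratedFDerivSup, iteratedFDerivSup, Real.mul_iSup_of_nonneg (abs_nonneg c)]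
  refine iSup_congr fun x => ?_
  rw [← Real.norm_eq_abs, ← norm_smul, ← iteratedFDeriv_const_smul_apply' (hf.contDiffAt hn x)]
  rfl

lemma C2Norm_nonneg (f : Euc d → ℝ) : 0 ≤ C2Norm f := by
  rw [C2Norm_eq_sum]
  exact Finset.sum_nonneg fun n _ => iteratedFDerivSup_nonneg n f

lemma C2Norm_add_le {f g : Euc d → ℝ} (hf : IsC2b f) (hg : IsC2b g) :
    C2Norm (fun y => f y + g y) ≤ C2Norm f + C2Norm g := by
  simp only [C2Norm_eq_sum, ← Finset.sum_add_distrib]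
  exact Finset.sum_le_sum fun n hn =>
    iteratedFDerivSup_add_le hf hg (Nat.le_of_lt_succ (Finset.mem_range.1 hn))

lemma C2Norm_const_mul {f : Euc d → ℝ} (hf : IsC2b f) (c : ℝ) :
    C2Norm (fun y => c * f y) = |c| * C2Norm f := by
  simp only [C2Norm_eq_sum, Finset.mul_sum]
  exact Finset.sum_congr rfl fun n hn =>
    iteratedFDerivSup_const_mul hf (Nat.le_of_lt_succ (Finset.mem_range.1 hn)) c

lemma C2Norm_add_mul_le {f g : Euc d → ℝ} (hf : IsC2b f) (hg : IsC2b g) {c M : ℝ}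
    (hc : |c| ≤ M) : C2Norm (fun y => f y + c * g y) ≤ C2Norm f + C2Norm g * M :=
  calc C2Norm (fun y => f y + c * g y) ≤ C2Norm f + |c| * C2Norm g :=
        (C2Norm_add_le hf ((isC2b_const c).mul hg)).trans_eq (by rw [C2Norm_const_mul hg])
    _ ≤ C2Norm f + C2Norm g * M := by
        rw [mul_comm]
        gcongr
        exact C2Norm_nonneg g

lemma abs_mul_le_mul_iSup_support {α : Type*} {φ w : α → ℝ} (hφ : ∀ y, 0 ≤ φ y)
    (hw : BddAbove (range fun y => |w y|)) (y : α) :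
    |φ y * w y| ≤ φ y * ⨆ z ∈ Function.support φ, |w z| := by
  rw [abs_mul, abs_of_nonneg (hφ y)]
  by_cases hy : φ y = 0
  · simp [hy]
  · gcongr
    · exact hφ y
    refine le_ciSup₂ (f := fun z (_ : z ∈ Function.support φ) => |w z|) (hw.mono ?_) y hy
    rintro _ ⟨_, ⟨z, rfl⟩, ⟨_, rfl⟩⟩
    exact ⟨z, rfl⟩

section Barrier

variable {dom : (Euc d → ℝ) → Prop} {N : (Euc d → ℝ) → ℝ} {I : (Euc d → ℝ) → Euc d → ℝ}
  {K₀ : ℝ} {u v h : Euc d → ℝ} {x : Euc d}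

lemma GCP.sub_le_of_le_add (hGCP : GCP dom I) (hLip : LipWith K₀ dom N I) (hu : dom u)
    (hv : dom v) (hvh : dom fun y => v y + h y) (hle : ∀ y, u y ≤ v y + h y)
    (hx : u x = v x + h x) : I u x - I v x ≤ K₀ * N h := by
  have hcmp := hGCP _ _ hu hvh hle x hx
  have hlip := hLip _ _ hvh hv x
  simp only [add_sub_cancel_left] at hlip
  linarith [le_abs_self (I (fun y => v y + h y) x - I v x)]

lemma GCP.sub_le_of_add_le (hGCP : GCP dom I) (hLip : LipWith K₀ dom N I) (hu : dom u)
    (hv : dom v) (hvh : dom fun y => v y + h y) (hle : ∀ y, v y + h y ≤ u y)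
    (hx : v x + h x = u x) : I v x - I u x ≤ K₀ * N h := by
  have hcmp := hGCP _ _ hvh hu hle x hx
  have hlip := hLip _ _ hvh hv x
  simp only [add_sub_cancel_left] at hlip
  linarith [neg_abs_le (I (fun y => v y + h y) x - I v x)]

end Barrier

theorem splitting_estimate_general (d : ℕ) (K₀ : ℝ) (hK₀ : 0 ≤ K₀)
    (I : (Euc d → ℝ) → Euc d → ℝ)
    (hLip : LipWith K₀ IsC2b C2Norm I)
    (hGCP : GCP IsC2b I)
    (x : Euc d) (φ : Euc d → ℝ) (hφ : IsC2b φ)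
    (hφ01 : ∀ y, 0 ≤ φ y ∧ φ y ≤ 1) (hφx : φ x = 0)
    (u v : Euc d → ℝ) (hu : IsC2b u) (hv : IsC2b v) :
    |I u x - I v x| ≤
      K₀ * (C2Norm (fun y => (1 - φ y) * (u y - v y))
        + C2Norm φ * (⨆ y ∈ Function.support φ, |u y - v y|)) := by
  set g : Euc d → ℝ := fun y => (1 - φ y) * (u y - v y)
  set M := ⨆ y ∈ Function.support φ, |u y - v y|
  have hw : IsC2b fun y => u y - v y := hu.sub hv
  have hg : IsC2b g := ((isC2b_const 1).sub hφ).mul hw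
  have hφw : ∀ y, |φ y * (u y - v y)| ≤ φ y * M :=
    abs_mul_le_mul_iSup_support (fun y => (hφ01 y).1) hw.bddAbove_abs
  have hsplit : ∀ y, u y = v y + g y + φ y * (u y - v y) := fun y => by ring
  have hbarrier : ∀ c, IsC2b fun y => v y + (g y + c * φ y) :=
    fun c => hv.add (hg.add ((isC2b_const c).mul hφ))
  have hcost : ∀ c, |c| ≤ M →
      K₀ * C2Norm (fun y => g y + c * φ y) ≤ K₀ * (C2Norm g + C2Norm φ * M) :=
    fun c hc => mul_le_mul_of_nonneg_left (C2Norm_add_mul_le hg hφ hc) hK₀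
  have hM : |M| = M :=
    abs_of_nonneg (Real.iSup_nonneg fun _ => Real.iSup_nonneg fun _ => abs_nonneg _)
  have hup := hGCP.sub_le_of_le_add (x := x) hLip hu hv (hbarrier M)
    (fun y => by linarith [hsplit y, le_abs_self (φ y * (u y - v y)), hφw y])
    (by simp [g, hφx])
  have hlow := hGCP.sub_le_of_add_le (x := x) hLip hu hv (hbarrier (-M))
    (fun y => by linarith [hsplit y, neg_abs_le (φ y * (u y - v y)), hφw y])
    (by simp [g, hφx])
  rw [abs_le]
  constructor <;> linarith [hcost M hM.le, hcost (-M) ((abs_neg M).trans hM).le]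

/-- splitting estimate for operators with the GCP, with a cutoff `φ`
vanishing at `x`:
`|I(u)(x) - I(v)(x)| ≤ K₀ ( ‖(1-φ)(u-v)‖_{C²} + ‖φ‖_{C²} sup_{spt φ}|u-v| )`. -/
theorem splitting_estimate (d : ℕ) (hd : 1 ≤ d) (K₀ : ℝ) (hK₀ : 0 ≤ K₀)
    (I : (Euc d → ℝ) → Euc d → ℝ)
    (hmap : ∀ u, IsC2b u → IsCb (I u))
    (hLip : LipWith K₀ IsC2b C2Norm I)
    (hGCP : GCP IsC2b I)
    (x : Euc d) (φ : Euc d → ℝ) (hφ : IsC2b φ)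
    (hφ01 : ∀ y, 0 ≤ φ y ∧ φ y ≤ 1) (hφx : φ x = 0)
    (u v : Euc d → ℝ) (hu : IsC2b u) (hv : IsC2b v) :
    |I u x - I v x| ≤
      K₀ * (C2Norm (fun y => (1 - φ y) * (u y - v y))
        + C2Norm φ * (⨆ y ∈ Function.support φ, |u y - v y|)) :=
  splitting_estimate_general d K₀ hK₀ I hLip hGCP x φ hφ hφ01 hφx u v hu hv

end
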